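/- Let α, β ∈ ℝ, F(x) = αx + β, and C = [-1, 1]. Then F is strongly pseudomonotone on C (i.e., there exists γ > 0 with the strong pseudomonotonicity property) if and only if α + β > 0 or α - β > 0. -/

import Mathlib

/-!
If `α + β > 0` or `α - β > 0`, then `F` is strongly monotone (when `α > 0`) or keeps a strict sign
on `[-1, 1]`; either way it is strongly pseudomonotone. Otherwise `F(1) ≤ 0 ≤ F(-1)`, so the
nonincreasing function `F` has a zero `x₀` in `[-1, 1]`. Pseudomonotonicity at `x₀` then forces
`γ (y - x₀)² ≤ F y (y - x₀) ≤ 0` for every `y ∈ [-1, 1]`, which is absurd.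
-/

open Set

def StronglyPseudomonotoneOn (F : ℝ → ℝ) (C : Set ℝ) : Prop :=
  ∃ γ > (0 : ℝ), ∀ x ∈ C, ∀ y ∈ C, F x * (y - x) ≥ 0 → F y * (y - x) ≥ γ * (y - x) ^ 2

namespace StronglyPseudomonotoneOn

variable {F : ℝ → ℝ} {C : Set ℝ}

theorem of_strongMonotoneOn {γ : ℝ} (hγ : 0 < γ)
    (hF : ∀ x ∈ C, ∀ y ∈ C, γ * (y - x) ^ 2 ≤ (F y - F x) * (y - x)) :
    StronglyPseudomonotoneOn F C :=
  ⟨γ, hγ, fun x hx y hy hxy => by nlinarith [hF x hx y hy]⟩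

/-- Where `F ≥ m > 0`, the premise `F x (y - x) ≥ 0` forces `y ≥ x`, and `y - x ≤ b - a` turns the
linear lower bound `m (y - x)` into a quadratic one. -/
theorem of_le_of_subset_Icc {m a b : ℝ} (hm : 0 < m) (hab : a < b) (hC : C ⊆ Icc a b)
    (hF : ∀ x ∈ C, m ≤ F x) : StronglyPseudomonotoneOn F C := by
  have hba : 0 < b - a := sub_pos.2 hab
  refine ⟨m / (b - a), by positivity, fun x hx y hy hxy => ?_⟩
  have hyx : 0 ≤ y - x := nonneg_of_mul_nonneg_right (by linarith) (hm.trans_le (hF x hx))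
  have hdiam : y - x ≤ b - a := by linarith [(hC hx).1, (hC hy).2]
  calc m / (b - a) * (y - x) ^ 2
      = m * (y - x) * ((y - x) / (b - a)) := by ring
    _ ≤ m * (y - x) := mul_le_of_le_one_right (by positivity) ((div_le_one hba).2 hdiam)
    _ ≤ F y * (y - x) := mul_le_mul_of_nonneg_right (hF y hy) hyx

theorem comp_neg (hF : StronglyPseudomonotoneOn F C) :
    StronglyPseudomonotoneOn (fun x => -F (-x)) (-C) := by
  obtain ⟨γ, hγ, h⟩ := hF
  refine ⟨γ, hγ, fun x hx y hy hxy => ?_⟩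
  have := h (-x) hx (-y) hy (by linarith)
  linarith

theorem subsingleton_of_antitoneOn (hF : StronglyPseudomonotoneOn F C) (hanti : AntitoneOn F C)
    {x₀ : ℝ} (hx₀ : x₀ ∈ C) (hzero : F x₀ = 0) : C.Subsingleton := by
  obtain ⟨γ, hγ, h⟩ := hF
  suffices ∀ y ∈ C, y = x₀ from fun y hy z hz => (this y hy).trans (this z hz).symm
  intro y hy
  have hbound := h x₀ hx₀ y hy (by simp [hzero])
  have hsign : F y * (y - x₀) ≤ 0 := by
    rcases le_total y x₀ with hyx | hxy
    · exact mul_nonpos_of_nonneg_of_nonpos (hzero ▸ hanti hy hx₀ hyx) (by linarith)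
    · exact mul_nonpos_of_nonpos_of_nonneg (hzero ▸ hanti hx₀ hy hxy) (by linarith)
  have hsq : (y - x₀) ^ 2 ≤ 0 := by
    by_contra! hpos
    nlinarith [mul_pos hγ hpos]
  exact sub_eq_zero.1 (pow_eq_zero_iff two_ne_zero |>.1 (le_antisymm hsq (sq_nonneg _)))

end StronglyPseudomonotoneOn

theorem stronglyPseudomonotoneOn_affine_of_add_pos {α β : ℝ} (h : 0 < α + β) :
    StronglyPseudomonotoneOn (fun x => α * x + β) (Icc (-1) 1) := by
  rcases lt_or_ge 0 α with hα | hα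
  · exact .of_strongMonotoneOn hα fun x _ y _ => le_of_eq (by ring)
  · exact .of_le_of_subset_Icc h (by norm_num) subset_rfl fun x hx => by nlinarith [hx.2]

theorem stmt_9 (α β : ℝ) :
    (∃ γ > (0:ℝ), ∀ x ∈ Set.Icc (-1:ℝ) 1, ∀ y ∈ Set.Icc (-1:ℝ) 1,
        (α * x + β) * (y - x) ≥ 0 → (α * y + β) * (y - x) ≥ γ * (y - x)^2)
      ↔ (α + β > 0 ∨ α - β > 0) := by
  change StronglyPseudomonotoneOn (fun x => α * x + β) (Icc (-1) 1) ↔ _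
  constructor
  · intro hF
    by_contra! hαβ
    have hcont : ContinuousOn (fun x : ℝ => α * x + β) (Icc (-1) 1) := by fun_prop
    obtain ⟨x₀, hx₀, hzero⟩ : ∃ x₀ ∈ Icc (-1 : ℝ) 1, α * x₀ + β = 0 :=
      intermediate_value_Icc' (by norm_num) hcont ⟨by linarith, by linarith⟩
    have hanti : AntitoneOn (fun x : ℝ => α * x + β) (Icc (-1) 1) :=
      fun x _ y _ hxy => by nlinarith
    have := hF.subsingleton_of_antitoneOn hanti hx₀ hzero
      (show (-1 : ℝ) ∈ Icc (-1) 1 by norm_num) (show (1 : ℝ) ∈ Icc (-1) 1 by norm_num)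
    norm_num at this
  · rintro (h | h)
    · exact stronglyPseudomonotoneOn_affine_of_add_pos h
    · have := (stronglyPseudomonotoneOn_affine_of_add_pos (α := α) (β := -β)
        (by linarith)).comp_neg
      simpa [neg_Icc, neg_add, ← sub_eq_add_neg, add_comm] using this
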